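/- arXiv:2011.01763 — 2 statements merged into one kernel-verified Lean document; each statement's English description precedes it below -/
import Mathlib

section
/- There is no finite bipartite graph G whose slide γ-graph S(G, γ) is isomorphic to the complete bipartite graph K_{2,3}. -/
/-- `D` is a dominating set of `G`: every vertex is in the closed neighbourhood of `D`. -/
def Dominates {V : Type*} (G : SimpleGraph V) (D : Finset V) : Prop :=
  ∀ v : V, ∃ d ∈ D, d = v ∨ G.Adj d v

/-- `D` is a γ-set: a dominating set of minimum cardinality. -/
def IsGammaSet {V : Type*} (G : SimpleGraph V) (D : Finset V) : Prop :=
  Dominates G D ∧ ∀ D' : Finset V, Dominates G D' → D.card ≤ D'.card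

/-- The private neighbours of `x` with respect to `D`: `N[x] − N[D − {x}]`. -/
def pn {V : Type*} [DecidableEq V] (G : SimpleGraph V) (D : Finset V) (x : V) : Set V :=
  {y | (y = x ∨ G.Adj x y) ∧ ∀ d ∈ D.erase x, ¬ (d = y ∨ G.Adj d y)}

/-- The slide adjacency relation on γ-sets. -/
def SlideRel {V : Type*} [DecidableEq V] (G : SimpleGraph V)
    (D₁ D₂ : Finset V) : Prop :=
  ∃ x ∈ D₁, ∃ y ∈ D₂, G.Adj x y ∧ D₁.erase x = D₂.erase y

/-- The slide γ-graph `S(G, γ)` of `G`. -/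
def slideGammaGraph {V : Type*} [DecidableEq V] (G : SimpleGraph V) :
    SimpleGraph {D : Finset V // IsGammaSet G D} :=
  SimpleGraph.fromRel (fun D₁ D₂ => SlideRel G D₁.1 D₂.1)

/-!
In a triangle-free graph, a private neighbour `w ≠ x` of `x ∈ A` can only be dominated after
replacing `x` by `y ∼ x` if `y = w` (otherwise `x, y, w` is a triangle). Suppose `S(G, γ) ≅ K_{2,3}`
with parts `{A, B}` and `{C₀, C₁, C₂}`. Since every `Cₖ` is one slide from both `A` and `B`,
`|A \ B| ∈ {1, 2}`.

If `A \ B = {α}` and `B \ A = {β}`, then `α ≁ β`, and each `Cₖ` is either `A - α + y` with `y ∼ α`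
or `A - x + β` with `x ∼ α, β`; two of the `Cₖ` have the same form. In the first form the private
neighbour of `α` is external (as `B` dominates it), so both `y` equal it. In the second form the
private neighbour of `x` is external (as `x ∼ α`), so it is `β`; but `β` is also adjacent to the
vertex `x' ∈ A - x` removed in the other form.

If `|A \ B| = 2`, two of the `Cₖ` remove the same vertex of `A`, which forces all edges between
`A \ B` and `B \ A`. Then `B` dominating shows that no `a ∈ A \ B` has an external private
neighbour, so all four sets `A - a + b` are γ-sets adjacent to `A`, which has only three neighbours.
-/

open Finset

namespace Finset

variable {α : Type*} [DecidableEq α] {A B C : Finset α} {a b x v : α}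

theorem sdiff_insert_erase (ha : a ∈ A) (hb : b ∉ A) : A \ insert b (A.erase a) = {a} := by
  ext c; simp only [mem_sdiff, mem_insert, mem_erase, mem_singleton]; grind

theorem insert_erase_sdiff (hb : b ∉ A) : insert b (A.erase a) \ A = {b} := by
  ext c; simp only [mem_sdiff, mem_insert, mem_erase, mem_singleton]; grind

theorem insert_erase_eq_of_sdiff_eq_singleton (hAB : A \ B = {a}) (hBA : B \ A = {b}) :
    insert b (A.erase a) = B := by
  ext c
  have h₁ := congrArg (c ∈ ·) hAB
  have h₂ := congrArg (c ∈ ·) hBA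
  simp only [mem_sdiff, mem_singleton, eq_iff_iff] at h₁ h₂
  simp only [mem_insert, mem_erase]
  grind

theorem sdiff_subset_pair (hAC : A \ C = {x}) (hCB : C \ B = {v}) : A \ B ⊆ {x, v} := by
  have := sdiff_triangle A C B
  rwa [hAC, hCB] at this

end Finset

section
variable {V : Type*} {G : SimpleGraph V} {A B C D : Finset V}

theorem IsGammaSet.card_eq (hA : IsGammaSet G A) (hB : IsGammaSet G B) : A.card = B.card :=
  le_antisymm (hA.2 B hB.1) (hB.2 A hA.1)

variable [DecidableEq V] {a b x x' y w α β : V}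

theorem slideRel_iff_sdiff {D₁ D₂ : Finset V} :
    SlideRel G D₁ D₂ ↔ ∃ x y, G.Adj x y ∧ D₁ \ D₂ = {x} ∧ D₂ \ D₁ = {y} := by
  constructor
  · rintro ⟨x, hx, y, hy, hxy, h⟩
    have h' := fun c => congrArg (c ∈ ·) h
    simp only [mem_erase, eq_iff_iff] at h'
    refine ⟨x, y, hxy, ?_, ?_⟩ <;> ext c <;> simp only [mem_sdiff, mem_singleton] <;> grind [hxy.ne]
  · rintro ⟨x, y, hxy, h₁, h₂⟩
    have hx : x ∈ D₁ \ D₂ := h₁ ▸ mem_singleton_self x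
    have hy : y ∈ D₂ \ D₁ := h₂ ▸ mem_singleton_self y
    refine ⟨x, (mem_sdiff.1 hx).1, y, (mem_sdiff.1 hy).1, hxy, ?_⟩
    rw [← insert_erase_eq_of_sdiff_eq_singleton h₁ h₂, erase_insert (by simp [(mem_sdiff.1 hy).2])]

theorem SlideRel.symm {D₁ D₂ : Finset V} (h : SlideRel G D₁ D₂) : SlideRel G D₂ D₁ := by
  obtain ⟨x, hx, y, hy, hxy, h⟩ := h
  exact ⟨y, hy, x, hx, hxy.symm, h.symm⟩

theorem SlideRel.irrefl (D : Finset V) : ¬ SlideRel G D D := by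
  rw [slideRel_iff_sdiff]
  rintro ⟨x, -, -, h, -⟩
  simp at h

theorem slideGammaGraph_adj {D₁ D₂ : {D : Finset V // IsGammaSet G D}} :
    (slideGammaGraph G).Adj D₁ D₂ ↔ SlideRel G D₁.1 D₂.1 := by
  rw [slideGammaGraph, SimpleGraph.fromRel_adj]
  refine ⟨fun ⟨_, h⟩ => h.elim id SlideRel.symm, fun h => ⟨?_, Or.inl h⟩⟩
  rintro rfl
  exact SlideRel.irrefl _ h

theorem IsGammaSet.insert_erase (hA : IsGammaSet G A) (ha : a ∈ A) (hb : b ∉ A)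
    (hD : Dominates G (insert b (A.erase a))) : IsGammaSet G (insert b (A.erase a)) := by
  refine ⟨hD, fun D' hD' => ?_⟩
  rw [card_insert_of_notMem (fun h => hb (mem_of_mem_erase h)), card_erase_add_one ha]
  exact hA.2 D' hD'

theorem IsGammaSet.exists_mem_pn (hA : IsGammaSet G A) (hx : x ∈ A) : ∃ w, w ∈ pn G A x := by
  have hnd : ¬ Dominates G (A.erase x) := fun hd =>
    (card_erase_lt_of_mem hx).not_ge (hA.2 _ hd)
  obtain ⟨w, hw⟩ := not_forall.1 hnd
  obtain ⟨d, hd, hdw⟩ := hA.1 w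
  refine ⟨w, ?_, fun d' hd' h => hw ⟨d', hd', h⟩⟩
  obtain rfl | hdx := eq_or_ne d x
  · exact hdw.imp Eq.symm id
  · exact (hw ⟨d, mem_erase.2 ⟨hdx, hd⟩, hdw⟩).elim

theorem Dominates.exists_dominator_of_mem_pn (hD : Dominates G D) (hw : w ∈ pn G A x) :
    ∃ d ∈ D, d ∉ A.erase x ∧ (d = w ∨ G.Adj d w) := by
  obtain ⟨d, hd, hdw⟩ := hD w
  exact ⟨d, hd, fun h => hw.2 d h hdw, hdw⟩

theorem Dominates.eq_or_adj_of_mem_pn (hD : Dominates G (insert y (A.erase x)))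
    (hw : w ∈ pn G A x) : y = w ∨ G.Adj y w := by
  obtain ⟨d, hd, hdA, hdw⟩ := hD.exists_dominator_of_mem_pn hw
  obtain rfl | hd := mem_insert.1 hd
  · exact hdw
  · exact (hdA hd).elim

theorem Dominates.insert_erase_of_pn_subset (hA : Dominates G A) (hpn : pn G A a ⊆ {a})
    (hab : G.Adj a b) : Dominates G (insert b (A.erase a)) := by
  intro w
  by_cases hw : ∃ d ∈ A.erase a, d = w ∨ G.Adj d w
  · obtain ⟨d, hd, hdw⟩ := hw
    exact ⟨d, mem_insert_of_mem hd, hdw⟩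
  · obtain ⟨d, hd, hdw⟩ := hA w
    have hda : d = a := by_contra fun hda => hw ⟨d, mem_erase.2 ⟨hda, hd⟩, hdw⟩
    have hwa : w = a := hpn ⟨hda ▸ hdw.imp Eq.symm id, fun d hd h => hw ⟨d, hd, h⟩⟩
    exact ⟨b, mem_insert_self _ _, Or.inr (hwa ▸ hab.symm)⟩

theorem eq_of_mem_pn_of_adj (hG : G.CliqueFree 3) (hw : w ∈ pn G A x) (hwx : w ≠ x)
    (hxy : G.Adj x y) (hyw : y = w ∨ G.Adj y w) : y = w := by
  refine hyw.resolve_right fun hyw => hG {x, y, w} ?_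
  exact SimpleGraph.is3Clique_triple_iff.2 ⟨hxy, (hw.1.resolve_left hwx), hyw⟩

theorem eq_of_mem_pn_of_dominates (hG : G.CliqueFree 3) (hw : w ∈ pn G A x) (hwx : w ≠ x)
    (hxy : G.Adj x y) (hD : Dominates G (insert y (A.erase x))) : y = w :=
  eq_of_mem_pn_of_adj hG hw hwx hxy (hD.eq_or_adj_of_mem_pn hw)

theorem SlideRel.exists_eq_insert_erase_of_notMem (h : SlideRel G A C) (hα : α ∈ A)
    (hαC : α ∉ C) : ∃ y, G.Adj α y ∧ C = insert y (A.erase α) := by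
  obtain ⟨x, y, hxy, hAC, hCA⟩ := slideRel_iff_sdiff.1 h
  obtain rfl : α = x := mem_singleton.1 (hAC ▸ mem_sdiff.2 ⟨hα, hαC⟩)
  exact ⟨y, hxy, (insert_erase_eq_of_sdiff_eq_singleton hAC hCA).symm⟩

theorem exists_eq_insert_erase_of_mem_of_sdiff_eq_singleton (hAB : A \ B = {α})
    (hBA : B \ A = {β}) (hAC : SlideRel G A C) (hBC : SlideRel G B C) (hαC : α ∈ C) :
    ∃ x ∈ A, G.Adj x α ∧ G.Adj x β ∧ C = insert β (A.erase x) := by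
  obtain ⟨x, y, hxy, hAC, hCA⟩ := slideRel_iff_sdiff.1 hAC
  obtain ⟨u, v, huv, hBC, hCB⟩ := slideRel_iff_sdiff.1 hBC
  have hC := (insert_erase_eq_of_sdiff_eq_singleton hAC hCA).symm
  simp only [Finset.ext_iff, mem_sdiff, mem_singleton] at hAB hBA hAC hCA hBC hCB
  obtain rfl : v = α := by grind
  obtain rfl : u = x := by grind [hAC x, hAB x, hBC x]
  obtain rfl : y = β := by grind [hCA y, hCB y, hBA y]
  exact ⟨u, (hAC u).2 rfl |>.1, huv, hxy, hC⟩

theorem subsingleton_dominating_slides (hG : G.CliqueFree 3) (hA : IsGammaSet G A)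
    (hα : α ∈ A) (hβα : β ≠ α) (hαβ : ¬ G.Adj α β)
    (hB : Dominates G (insert β (A.erase α))) :
    {y | G.Adj α y ∧ Dominates G (insert y (A.erase α))}.Subsingleton := by
  obtain ⟨w, hw⟩ := hA.exists_mem_pn hα
  have hwα : w ≠ α := by
    rintro rfl
    exact (hB.eq_or_adj_of_mem_pn hw).elim hβα fun h => hαβ h.symm
  rintro y ⟨hαy, hy⟩ y' ⟨hαy', hy'⟩
  rw [eq_of_mem_pn_of_dominates hG hw hwα hαy hy, eq_of_mem_pn_of_dominates hG hw hwα hαy' hy']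

theorem not_adj_of_dominates_insert_erase (hG : G.CliqueFree 3) (hA : IsGammaSet G A)
    (hx : x ∈ A) (hα : α ∈ A) (hxα : G.Adj x α) (hxβ : G.Adj x β)
    (hD : Dominates G (insert β (A.erase x))) (hx' : x' ∈ A.erase x) : ¬ G.Adj x' β := by
  obtain ⟨w, hw⟩ := hA.exists_mem_pn hx
  have hwx : w ≠ x := by
    rintro rfl
    exact hw.2 α (mem_erase.2 ⟨hxα.ne.symm, hα⟩) (Or.inr hxα.symm)
  obtain rfl := eq_of_mem_pn_of_dominates hG hw hwx hxβ hD
  exact fun h => hw.2 x' hx' (Or.inr h)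

theorem false_of_sdiff_eq_singleton (hG : G.CliqueFree 3) (hA : IsGammaSet G A)
    (hB : Dominates G B) (hAB : A \ B = {α}) (hBA : B \ A = {β}) (hAB' : ¬ SlideRel G A B)
    {C : Fin 3 → Finset V} (hC : Function.Injective C) (hCdom : ∀ k, Dominates G (C k))
    (hAC : ∀ k, SlideRel G A (C k)) (hBC : ∀ k, SlideRel G B (C k)) : False := by
  have hα : α ∈ A := (mem_sdiff.1 (hAB ▸ mem_singleton_self α)).1
  have hβ : β ∉ A := (mem_sdiff.1 (hBA ▸ mem_singleton_self β)).2
  have hαβ : ¬ G.Adj α β := fun h => hAB' (slideRel_iff_sdiff.2 ⟨α, β, h, hAB, hBA⟩)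
  rw [← insert_erase_eq_of_sdiff_eq_singleton hAB hBA] at hB
  obtain ⟨i, j, hij, hsame⟩ := Fintype.exists_ne_map_eq_of_card_lt (fun k => decide (α ∈ C k))
    (by simp)
  simp only [decide_eq_decide] at hsame
  by_cases hαi : α ∈ C i
  · obtain ⟨x, hx, hxα, hxβ, hCi⟩ :=
      exists_eq_insert_erase_of_mem_of_sdiff_eq_singleton hAB hBA (hAC i) (hBC i) hαi
    obtain ⟨x', hx', -, hx'β, hCj⟩ :=
      exists_eq_insert_erase_of_mem_of_sdiff_eq_singleton hAB hBA (hAC j) (hBC j) (hsame.1 hαi)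
    have hxx' : x' ≠ x := fun h => hij (hC (by rw [hCi, hCj, h]))
    exact not_adj_of_dominates_insert_erase hG hA hx hα hxα hxβ (hCi ▸ hCdom i)
      (mem_erase.2 ⟨hxx', hx'⟩) hx'β
  · obtain ⟨y, hαy, hCi⟩ := (hAC i).exists_eq_insert_erase_of_notMem hα hαi
    obtain ⟨y', hαy', hCj⟩ := (hAC j).exists_eq_insert_erase_of_notMem hα (hsame.not.1 hαi)
    refine hij (hC ?_)
    rw [hCi, hCj, subsingleton_dominating_slides hG hA hα (ne_of_mem_of_not_mem hα hβ).symm hαβ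
      hB ⟨hαy, hCi ▸ hCdom i⟩ ⟨hαy', hCj ▸ hCdom j⟩]

theorem exists_eq_insert_erase_of_card_sdiff_eq_two (hAB : (A \ B).card = 2)
    (hBA : (B \ A).card = 2) (hAC : SlideRel G A C) (hBC : SlideRel G B C) :
    ∃ x ∈ A \ B, ∃ y ∈ B \ A, G.Adj x y ∧ C = insert y (A.erase x) ∧
      ∀ a ∈ A \ B, a ≠ x → ∀ b ∈ B \ A, b ≠ y → G.Adj a b := by
  obtain ⟨x, y, hxy, hAC, hCA⟩ := slideRel_iff_sdiff.1 hAC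
  obtain ⟨u, v, huv, hBC, hCB⟩ := slideRel_iff_sdiff.1 hBC
  have hAB' : A \ B = {x, v} :=
    eq_of_subset_of_card_le (sdiff_subset_pair hAC hCB) (hAB ▸ card_le_two)
  have hBA' : B \ A = {u, y} :=
    eq_of_subset_of_card_le (sdiff_subset_pair hBC hCA) (hBA ▸ card_le_two)
  refine ⟨x, by simp [hAB'], y, by simp [hBA'], hxy,
    (insert_erase_eq_of_sdiff_eq_singleton hAC hCA).symm, fun a ha hax b hb hby => ?_⟩
  rw [hAB', mem_insert, mem_singleton] at ha
  rw [hBA', mem_insert, mem_singleton] at hb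
  rw [ha.resolve_left hax, hb.resolve_right hby]
  exact huv.symm

theorem pn_subset_singleton_of_forall_adj (hG : G.CliqueFree 3) (hB : Dominates G B)
    (hAB : 1 < (A \ B).card) (hadj : ∀ a ∈ A \ B, ∀ b ∈ B \ A, G.Adj a b) (ha : a ∈ A \ B) :
    pn G A a ⊆ {a} := by
  intro w hw
  by_contra hwa
  obtain ⟨d, hd, hdA, hdw⟩ := hB.exists_dominator_of_mem_pn hw
  have hd' : d ∈ B \ A :=
    mem_sdiff.2 ⟨hd, fun h => hdA (mem_erase.2 ⟨ne_of_mem_of_not_mem hd (mem_sdiff.1 ha).2, h⟩)⟩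
  obtain rfl := eq_of_mem_pn_of_adj hG hw hwa (hadj a ha d hd') hdw
  obtain ⟨a', ha', ha'a⟩ := exists_mem_ne hAB a
  exact hw.2 a' (mem_erase.2 ⟨ha'a, (mem_sdiff.1 ha').1⟩) (Or.inr (hadj a' ha' d hd'))

theorem false_of_forall_adj_sdiff (hG : G.CliqueFree 3) (hA : IsGammaSet G A) (hB : IsGammaSet G B)
    (hAB : (A \ B).card = 2) (hadj : ∀ a ∈ A \ B, ∀ b ∈ B \ A, G.Adj a b) (C : Fin 3 → Finset V)
    (hall : ∀ D, IsGammaSet G D → D = A ∨ D = B ∨ D ∈ Set.range C) : False := by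
  have hBA : (B \ A).card = 2 := (card_sdiff_comm (hA.card_eq hB)).symm.trans hAB
  have hmaps : ∀ p ∈ (A \ B) ×ˢ (B \ A), insert p.2 (A.erase p.1) ∈ univ.image C := by
    rintro ⟨a, b⟩ hp
    obtain ⟨ha, hb⟩ := mem_product.1 hp
    have hbA := (mem_sdiff.1 hb).2
    have hγ := hA.insert_erase (mem_sdiff.1 ha).1 hbA <| hA.1.insert_erase_of_pn_subset
      (pn_subset_singleton_of_forall_adj hG hB.1 (by omega) hadj ha) (hadj a ha b hb)
    obtain hDA | hDB | ⟨k, hk⟩ := hall _ hγ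
    · exact (hbA (hDA ▸ mem_insert_self b _)).elim
    · have := hAB
      rw [← hDB, sdiff_insert_erase (mem_sdiff.1 ha).1 hbA, card_singleton] at this
      omega
    · exact mem_image.2 ⟨k, mem_univ k, hk⟩
  obtain ⟨p, hp, q, hq, hpq, heq⟩ := exists_ne_map_eq_of_card_lt_of_maps_to
    (by rw [card_product, hAB, hBA]; exact (card_image_le).trans_lt (by simp)) hmaps
  obtain ⟨hp₁, hp₂⟩ := mem_product.1 hp
  obtain ⟨hq₁, hq₂⟩ := mem_product.1 hq
  have h₁ := congrArg (A \ ·) heq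
  have h₂ := congrArg (· \ A) heq
  simp only [sdiff_insert_erase (mem_sdiff.1 hp₁).1 (mem_sdiff.1 hp₂).2,
    sdiff_insert_erase (mem_sdiff.1 hq₁).1 (mem_sdiff.1 hq₂).2,
    insert_erase_sdiff (mem_sdiff.1 hp₂).2, insert_erase_sdiff (mem_sdiff.1 hq₂).2,
    singleton_inj] at h₁ h₂
  exact hpq (Prod.ext h₁ h₂)

theorem false_of_card_sdiff_eq_two (hG : G.CliqueFree 3) (hA : IsGammaSet G A)
    (hB : IsGammaSet G B) (hAB : (A \ B).card = 2) {C : Fin 3 → Finset V}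
    (hC : Function.Injective C) (hAC : ∀ k, SlideRel G A (C k)) (hBC : ∀ k, SlideRel G B (C k))
    (hall : ∀ D, IsGammaSet G D → D = A ∨ D = B ∨ D ∈ Set.range C) : False := by
  have hBA : (B \ A).card = 2 := (card_sdiff_comm (hA.card_eq hB)).symm.trans hAB
  choose x hx y hy hxy hCxy hcompl using
    fun k => exists_eq_insert_erase_of_card_sdiff_eq_two hAB hBA (hAC k) (hBC k)
  obtain ⟨i, -, j, -, hij, hxij⟩ := exists_ne_map_eq_of_card_lt_of_maps_to
    (s := univ) (t := A \ B) (by simp [hAB]) (fun k _ => hx k)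
  have hyij : y i ≠ y j := fun h => hij (hC (by rw [hCxy i, hCxy j, hxij, h]))
  have hBA' : B \ A = {y i, y j} := (eq_of_subset_of_card_le
    (insert_subset (hy i) (singleton_subset_iff.2 (hy j))) (by rw [hBA, card_pair hyij])).symm
  refine false_of_forall_adj_sdiff hG hA hB hAB (fun a ha b hb => ?_) C hall
  obtain rfl | hai := eq_or_ne a (x i)
  · rw [hBA', mem_insert, mem_singleton] at hb
    obtain rfl | rfl := hb
    exacts [hxy i, hxij ▸ hxy j]
  · obtain rfl | hbi := eq_or_ne b (y i)
    · exact hcompl j a ha (hxij ▸ hai) _ hb hyij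
    · exact hcompl i a ha hai b hb hbi

theorem false_of_common_slides (hG : G.CliqueFree 3) (hA : IsGammaSet G A)
    (hB : IsGammaSet G B) (hAB : A ≠ B) (hAB' : ¬ SlideRel G A B) {C : Fin 3 → Finset V}
    (hC : Function.Injective C) (hCγ : ∀ k, IsGammaSet G (C k))
    (hAC : ∀ k, SlideRel G A (C k)) (hBC : ∀ k, SlideRel G B (C k))
    (hall : ∀ D, IsGammaSet G D → D = A ∨ D = B ∨ D ∈ Set.range C) : False := by
  have hcard := hA.card_eq hB
  have hpos : 0 < (A \ B).card :=
    card_pos.2 (sdiff_nonempty.2 fun h => hAB (eq_of_subset_of_card_le h hcard.ge))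
  have hle : (A \ B).card ≤ 2 := by
    obtain ⟨x, -, -, hAC, -⟩ := slideRel_iff_sdiff.1 (hAC 0)
    obtain ⟨-, v, -, -, hCB⟩ := slideRel_iff_sdiff.1 (hBC 0)
    exact (card_le_card (sdiff_subset_pair hAC hCB)).trans card_le_two
  obtain h1 | h2 : (A \ B).card = 1 ∨ (A \ B).card = 2 := by omega
  · obtain ⟨α, hα⟩ := card_eq_one.1 h1
    obtain ⟨β, hβ⟩ := card_eq_one.1 ((card_sdiff_comm hcard).symm.trans h1)
    exact false_of_sdiff_eq_singleton hG hA hB.1 hα hβ hAB' hC (fun k => (hCγ k).1) hAC hBC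
  · exact false_of_card_sdiff_eq_two hG hA hB h2 hC hAC hBC hall

end

theorem stmt_4_general {V : Type*} [DecidableEq V] (G : SimpleGraph V)
    (hbip : G.Colorable 2) :
    ¬ Nonempty (slideGammaGraph G ≃g completeBipartiteGraph (Fin 2) (Fin 3)) := by
  rintro ⟨e⟩
  let S : Fin 2 ⊕ Fin 3 → Finset V := fun a => (e.symm a).1
  have hS : Function.Injective S := Subtype.val_injective.comp e.symm.injective
  have hslide (a b) : SlideRel G (S a) (S b) ↔ (completeBipartiteGraph (Fin 2) (Fin 3)).Adj a b :=
    slideGammaGraph_adj.symm.trans e.symm.map_adj_iff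
  refine false_of_common_slides (A := S (.inl 0)) (B := S (.inl 1)) (C := S ∘ .inr)
    (hbip.cliqueFree (by norm_num)) (e.symm _).2 (e.symm _).2 (hS.ne (by simp)) (by simp [hslide])
    (hS.comp Sum.inr_injective) (fun _ => (e.symm _).2) (fun k => by simp [hslide])
    (fun k => by simp [hslide]) fun D hD => ?_
  obtain ⟨a, rfl⟩ : ∃ a, S a = D := ⟨e ⟨D, hD⟩, by simp [S]⟩
  rcases a with a | k
  · fin_cases a <;> simp
  · exact Or.inr (Or.inr ⟨k, rfl⟩)

theorem stmt_4 {V : Type*} [Fintype V] [DecidableEq V] (G : SimpleGraph V)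
    (hbip : G.Colorable 2) :
    ¬ Nonempty (slideGammaGraph G ≃g completeBipartiteGraph (Fin 2) (Fin 3)) :=
  stmt_4_general G hbip
end

section
/- If G is a triangle-free finite graph, then the slide γ-graph S(G, γ) is triangle-free. -/
lemma mem_trans_of_erase_eq {V : Type*} [DecidableEq V] {D E : Finset V} {x y : V}
    (he : D.erase x = E.erase y) {z : V} (hz : z ∈ D) (hne : z ≠ x) : z ∈ E :=
  Finset.mem_of_mem_erase (he ▸ Finset.mem_erase.mpr ⟨hne, hz⟩)

lemma slide_struct {V : Type*} [DecidableEq V] (G : SimpleGraph V) {D₁ D₂ : Finset V}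
    (h : SlideRel G D₁ D₂) :
    ∃ x y, G.Adj x y ∧ x ∈ D₁ ∧ x ∉ D₂ ∧ y ∈ D₂ ∧ y ∉ D₁ ∧ D₁.erase x = D₂.erase y := by
  obtain ⟨x, hx, y, hy, hadj, he⟩ := h
  have hxy : x ≠ y := hadj.ne
  refine ⟨x, y, hadj, hx, ?_, hy, ?_, he⟩
  · intro hx2
    have : x ∈ D₂.erase y := Finset.mem_erase.mpr ⟨hxy, hx2⟩
    rw [← he] at this
    exact (Finset.mem_erase.mp this).1 rfl
  · intro hy1
    have : y ∈ D₁.erase x := Finset.mem_erase.mpr ⟨hxy.symm, hy1⟩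
    rw [he] at this
    exact (Finset.mem_erase.mp this).1 rfl

lemma slide_adj_struct {V : Type*} [DecidableEq V] (G : SimpleGraph V)
    {A B : {D : Finset V // IsGammaSet G D}} (h : (slideGammaGraph G).Adj A B) :
    ∃ x y, G.Adj x y ∧ x ∈ A.1 ∧ x ∉ B.1 ∧ y ∈ B.1 ∧ y ∉ A.1 ∧
      A.1.erase x = B.1.erase y := by
  rw [slideGammaGraph, SimpleGraph.fromRel_adj] at h
  rcases h.2 with h' | h'
  · exact slide_struct G h'
  · obtain ⟨x, y, hadj, hx, hx2, hy, hy2, he⟩ := slide_struct G h'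
    exact ⟨y, x, hadj.symm, hy, hy2, hx, hx2, he.symm⟩

theorem stmt_11 {V : Type*} [Fintype V] [DecidableEq V] (G : SimpleGraph V)
    (hG : G.CliqueFree 3) : (slideGammaGraph G).CliqueFree 3 := by
  intro t ht
  rw [SimpleGraph.is3Clique_iff] at ht
  obtain ⟨A, B, C, hAB, hAC, hBC, -⟩ := ht
  obtain ⟨x, y, axy, hxA, hxB, hyB, hyA, eAB⟩ := slide_adj_struct G hAB
  obtain ⟨a, b, aab, haA, haC, hbC, hbA, eAC⟩ := slide_adj_struct G hAC
  obtain ⟨c, d, acd, hcB, hcC, hdC, hdB, eBC⟩ := slide_adj_struct G hBC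
  by_cases hxa : x = a
  · -- then c = y and d = b, triangle x y b
    have hcy : c = y := by
      by_contra hne
      have hcA : c ∈ A.1 := mem_trans_of_erase_eq eAB.symm hcB hne
      have hca : c ≠ a := fun h => hxB (by rw [hxa, ← h]; exact hcB)
      exact hcC (mem_trans_of_erase_eq eAC hcA hca)
    have hdb : d = b := by
      by_contra hne
      have hdA : d ∈ A.1 := mem_trans_of_erase_eq eAC.symm hdC hne
      have hdx : d ≠ x := fun h => haC (by rw [← hxa, ← h]; exact hdC)
      exact hdB (mem_trans_of_erase_eq eAB hdA hdx)
    have tri : G.IsNClique 3 {x, y, b} :=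
      SimpleGraph.is3Clique_triple_iff.mpr ⟨axy, hxa ▸ aab, hcy ▸ hdb ▸ acd⟩
    exact hG _ tri
  · -- x ≠ a : then c = a, d = x, b = y, triangle x y a
    have haB : a ∈ B.1 := mem_trans_of_erase_eq eAB haA (fun h => hxa h.symm)
    have hca : c = a := by
      by_contra hne
      exact haC (mem_trans_of_erase_eq eBC haB (fun h => hne h.symm))
    have hxC : x ∈ C.1 := mem_trans_of_erase_eq eAC hxA hxa
    have hdx : d = x := by
      by_contra hne
      exact hxB (mem_trans_of_erase_eq eBC.symm hxC (fun h => hne h.symm))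
    have hyC : y ∈ C.1 := by
      have hyc : y ≠ c := fun h => hyA (h ▸ hca ▸ haA)
      exact mem_trans_of_erase_eq eBC hyB hyc
    have hby : b = y := by
      by_contra hne
      exact hyA (mem_trans_of_erase_eq eAC.symm hyC (fun h => hne h.symm))
    have axa : G.Adj x a := (hca ▸ hdx ▸ acd).symm
    have aya : G.Adj y a := (hby ▸ aab).symm
    exact hG _ (SimpleGraph.is3Clique_triple_iff.mpr ⟨axy, axa, aya⟩)
end
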